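/- arXiv:2504.10455 — 6 statements merged into one kernel-verified Lean document; each statement's English description precedes it below -/
import Mathlib

section
/- Let D and E be real symmetric n×n matrices and let C be the 2n×2n real symmetric matrix with block form [[D, E],[E, -D]]. Then the maximum of the absolute values of the eigenvalues of C equals the largest singular value of the complex matrix D + iE. -/
/-!
Over `ℂ`, conjugation by `S = [[1, 1], [i, -i]]` turns `C²` into the block diagonal matrix
`diag ((D - iE)(D + iE), (D + iE)(D - iE))`. Symmetry of `D` and `E` makes `D - iE` the adjoint
of `M = D + iE`, so `C²` and `M Mᴴ` have the same spectrum; by spectral mapping the squares of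
the eigenvalues of `C` are exactly the eigenvalues of `M Mᴴ`, and taking maxima gives the claim.
-/

open Matrix Polynomial Complex

namespace Matrix

section

variable {n : Type*} [Fintype n] [DecidableEq n]

theorem charpoly_eq_of_mul_eq_mul {R : Type*} [CommRing R] {S X Y : Matrix n n R}
    (hS : IsUnit S) (h : X * S = S * Y) : X.charpoly = Y.charpoly := by
  obtain ⟨u, rfl⟩ := hS
  rw [← charpoly_units_conj u Y, ← h, mul_assoc, ← coe_units_inv, Units.mul_inv, mul_one]

theorem isUnit_fromBlocks_one_one_I_smul :
    IsUnit (fromBlocks 1 1 (I • 1) (-I • 1) : Matrix (n ⊕ n) (n ⊕ n) ℂ) := by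
  rw [isUnit_iff_isUnit_det, det_fromBlocks_one₁₁, mul_one, ← sub_smul, det_smul, det_one,
    mul_one, isUnit_iff_ne_zero]
  exact pow_ne_zero _ (by grind [I_ne_zero])

theorem fromBlocks_sq_mul_eq (A B : Matrix n n ℂ) :
    fromBlocks A B B (-A) ^ 2 * fromBlocks 1 1 (I • 1) (-I • 1) =
      fromBlocks 1 1 (I • 1) (-I • 1) *
        fromBlocks ((A - I • B) * (A + I • B)) 0 0 ((A + I • B) * (A - I • B)) := by
  simp only [sq, fromBlocks_multiply]
  congr 1 <;>
  · simp only [mul_one, one_mul, mul_zero, add_zero, zero_add, mul_add, add_mul, mul_sub,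
      sub_mul, mul_neg, neg_mul, smul_mul_assoc, mul_smul_comm, smul_smul, I_mul_I, one_smul,
      neg_smul, neg_neg, smul_add, smul_sub, smul_neg]
    module

theorem charpoly_fromBlocks_sq (A B : Matrix n n ℂ) :
    (fromBlocks A B B (-A) ^ 2).charpoly = ((A + I • B) * (A - I • B)).charpoly ^ 2 := by
  rw [charpoly_eq_of_mul_eq_mul isUnit_fromBlocks_one_one_I_smul (fromBlocks_sq_mul_eq A B),
    charpoly_fromBlocks_zero₁₂, charpoly_mul_comm, sq]

theorem spectrum_fromBlocks_sq (A B : Matrix n n ℂ) :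
    spectrum ℂ (fromBlocks A B B (-A) ^ 2) = spectrum ℂ ((A + I • B) * (A - I • B)) := by
  ext z
  simp only [mem_spectrum_iff_isRoot_charpoly, charpoly_fromBlocks_sq, IsRoot.def, eval_pow,
    pow_eq_zero_iff two_ne_zero]

theorem IsHermitian.spectrum_map_ofReal {A : Matrix n n ℝ} (hA : A.IsHermitian) :
    spectrum ℂ (A.map ofReal) = ofReal '' Set.range hA.eigenvalues := by
  ext z
  change z ∈ spectrum ℂ (A.map ofRealHom) ↔ _
  rw [mem_spectrum_iff_isRoot_charpoly, charpoly_map, hA.charpoly_eq]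
  simp only [Polynomial.map_prod, Polynomial.map_sub, map_X, map_C, IsRoot.def, eval_prod,
    eval_sub, eval_X, eval_C, Finset.prod_eq_zero_iff, Finset.mem_univ, true_and, sub_eq_zero]
  simp [eq_comm]

end

theorem conjTranspose_map_ofReal_add_I_smul {n : Type*} {D E : Matrix n n ℝ} (hD : D.IsSymm)
    (hE : E.IsSymm) : (D.map ofReal + I • E.map ofReal)ᴴ = D.map ofReal - I • E.map ofReal := by
  ext i j
  simp [hD.apply i j, hE.apply i j, sub_eq_add_neg]

end Matrix

theorem Real.iSup_abs_eq_sqrt_iSup_sq {ι : Type*} [Finite ι] (f : ι → ℝ) :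
    ⨆ i, |f i| = √(⨆ i, f i ^ 2) := by
  rcases isEmpty_or_nonempty ι with _ | _
  · simp
  · simp_rw [← Real.sqrt_sq_eq_abs]
    exact (Real.sqrt_monotone.map_ciSup_of_continuousAt Real.continuous_sqrt.continuousAt
      (Set.finite_range (fun i => f i ^ 2)).bddAbove).symm

theorem max_abs_eigenvalue_block_eq_max_singular_value_general {n : ℕ}
    (D E : Matrix (Fin n) (Fin n) ℝ) (hD : D.IsSymm) (hE : E.IsSymm)
    (hC : (Matrix.fromBlocks D E E (-D)).IsHermitian)
    (hM : ((D.map Complex.ofReal + Complex.I • E.map Complex.ofReal) *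
        (D.map Complex.ofReal + Complex.I • E.map Complex.ofReal)ᴴ).IsHermitian) :
    (⨆ i, |hC.eigenvalues i|) = Real.sqrt (⨆ i, hM.eigenvalues i) := by
  have hspec := spectrum_fromBlocks_sq (D.map ofReal) (E.map ofReal)
  rw [← conjTranspose_map_ofReal_add_I_smul hD hE, ← Matrix.map_neg ofReal ofReal_neg,
    ← fromBlocks_map, spectrum.map_pow_of_pos _ two_pos, hC.spectrum_map_ofReal,
    hM.spectrum_eq_image_range, RCLike.ofReal_eq_complex_ofReal, Set.image_image] at hspec
  have hrange : Set.range (fun i => hC.eigenvalues i ^ 2) = Set.range hM.eigenvalues := by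
    refine Set.image_injective.mpr ofReal_injective ?_
    simpa only [← Set.range_comp, Function.comp_def, ofReal_pow] using hspec
  rw [Real.iSup_abs_eq_sqrt_iSup_sq, iSup, iSup, hrange]

/-- For real symmetric `D`, `E` and `C = [[D, E],[E, -D]]`, the maximum of
the absolute values of the eigenvalues of `C` equals the largest singular value of `D + iE`,
i.e. the square root of the largest eigenvalue of `(D + iE)(D + iE)ᴴ`. -/
theorem max_abs_eigenvalue_block_eq_max_singular_value {n : ℕ} (hn : 0 < n)
    (D E : Matrix (Fin n) (Fin n) ℝ) (hD : D.IsSymm) (hE : E.IsSymm)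
    (hC : (Matrix.fromBlocks D E E (-D)).IsHermitian)
    (hM : ((D.map Complex.ofReal + Complex.I • E.map Complex.ofReal) *
        (D.map Complex.ofReal + Complex.I • E.map Complex.ofReal)ᴴ).IsHermitian) :
    (⨆ i, |hC.eigenvalues i|) = Real.sqrt (⨆ i, hM.eigenvalues i) :=
  max_abs_eigenvalue_block_eq_max_singular_value_general D E hD hE hC hM
end

section
/- Let G : ℕ^{m+n} → ℂ satisfy the recurrence G_{ℓ+1_i} = (1/√(ℓ_i+1)) [ b_i G_ℓ + Σ_j √(ℓ_j) A_{ij} G_{ℓ-1_j} ] for all ℓ and all i, where A is an (m+n)×(m+n) complex symmetric matrix whose top-left m×m block is zero and b ∈ ℂ^{m+n} has its first m entries equal to zero. Then for all (j,k) ∈ ℕ^m × ℕ^n with ‖j‖₁ > ‖k‖₁, one has G_{(j,k)} = 0. -/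
open Matrix

lemma sum_dec_aux {α : Type*} [DecidableEq α] (S : Finset α) (ℓ : α → ℕ) (i : α)
    (hi : i ∈ S) (h1 : 1 ≤ ℓ i) :
    (∑ p ∈ S, (ℓ p - if p = i then 1 else 0)) + 1 = ∑ p ∈ S, ℓ p := by
  rw [← Finset.sum_erase_add _ _ hi, ← Finset.sum_erase_add _ ℓ hi]
  have h : ∑ p ∈ S.erase i, (ℓ p - if p = i then 1 else 0) = ∑ p ∈ S.erase i, ℓ p := by
    apply Finset.sum_congr rfl
    intro p hp
    simp [Finset.ne_of_mem_erase hp]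
  rw [h]
  have hii : (if i = i then 1 else 0) = 1 := if_pos rfl
  omega

lemma sum_same_aux {α : Type*} [DecidableEq α] (S : Finset α) (ℓ : α → ℕ) (i : α)
    (hi : i ∉ S) :
    (∑ p ∈ S, (ℓ p - if p = i then 1 else 0)) = ∑ p ∈ S, ℓ p := by
  apply Finset.sum_congr rfl
  intro p hp
  have : p ≠ i := fun h => hi (h ▸ hp)
  simp [this]

/-- Let `G : ℕ^{m+n} → ℂ` satisfy the Fock-amplitude recurrence
`√(ℓ_i+1) G_{ℓ+1_i} = b_i G_ℓ + Σ_j √(ℓ_j) A_{ij} G_{ℓ-1_j}` where the top-left `m × m`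
block of the symmetric matrix `A` vanishes and the first `m` entries of `b` vanish.
Then `G_{(j,k)} = 0` whenever `‖j‖₁ > ‖k‖₁` (sum over the first `m` resp. last `n` indices). -/
theorem core_state_fock_support {m n : ℕ}
    (A : Matrix (Fin (m + n)) (Fin (m + n)) ℂ) (b : Fin (m + n) → ℂ)
    (G : (Fin (m + n) → ℕ) → ℂ)
    (hAsymm : Aᵀ = A)
    (hAblock : ∀ i j : Fin (m + n), i.val < m → j.val < m → A i j = 0)
    (hb : ∀ i : Fin (m + n), i.val < m → b i = 0)
    (hrec : ∀ (ℓ : Fin (m + n) → ℕ) (i : Fin (m + n)),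
      (Real.sqrt ((ℓ i : ℝ) + 1) : ℂ) * G (fun j => ℓ j + if j = i then 1 else 0) =
        b i * G ℓ +
          ∑ j : Fin (m + n),
            (Real.sqrt (ℓ j : ℝ) : ℂ) * A i j * G (fun p => ℓ p - if p = j then 1 else 0)) :
    ∀ ℓ : Fin (m + n) → ℕ,
      (∑ i ∈ Finset.univ.filter (fun i : Fin (m + n) => m ≤ i.val), ℓ i) <
        (∑ i ∈ Finset.univ.filter (fun i : Fin (m + n) => i.val < m), ℓ i) →
      G ℓ = 0 := by
  suffices h : ∀ N (ℓ : Fin (m + n) → ℕ), (∑ i, ℓ i) = N →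
      (∑ i ∈ Finset.univ.filter (fun i : Fin (m + n) => m ≤ i.val), ℓ i) <
        (∑ i ∈ Finset.univ.filter (fun i : Fin (m + n) => i.val < m), ℓ i) →
      G ℓ = 0 by
    intro ℓ hℓ; exact h _ ℓ rfl hℓ
  intro N
  induction N using Nat.strong_induction_on with
  | _ N IH =>
  intro ℓ hN hlt
  set S := Finset.univ.filter (fun i : Fin (m + n) => i.val < m) with hS
  set T := Finset.univ.filter (fun i : Fin (m + n) => m ≤ i.val) with hT
  have hpos : (∑ i ∈ S, ℓ i) ≠ 0 := by omega
  obtain ⟨i, hiS, hi0⟩ := Finset.exists_ne_zero_of_sum_ne_zero hpos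
  have him : i.val < m := (Finset.mem_filter.mp hiS).2
  have hℓi : 1 ≤ ℓ i := Nat.one_le_iff_ne_zero.mpr hi0
  set ℓ' : Fin (m + n) → ℕ := fun p => ℓ p - if p = i then 1 else 0 with hℓ'
  have heq : (fun j => ℓ' j + if j = i then 1 else 0) = ℓ := by
    funext p
    by_cases hp : p = i <;> simp [hℓ', hp] <;> omega
  have hr := hrec ℓ' i
  rw [heq, hb i him, zero_mul, zero_add] at hr
  have hiT : i ∉ T := by simp [hT]; omega
  -- auxiliary sum facts about ℓ'
  have hS1 : (∑ p ∈ S, ℓ' p) + 1 = ∑ p ∈ S, ℓ p := sum_dec_aux S ℓ i hiS hℓi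
  have hT1 : (∑ p ∈ T, ℓ' p) = ∑ p ∈ T, ℓ p := sum_same_aux T ℓ i hiT
  have hU1 : (∑ p, ℓ' p) + 1 = ∑ p, ℓ p := sum_dec_aux Finset.univ ℓ i (Finset.mem_univ i) hℓi
  have hsum : (∑ j : Fin (m + n),
      (Real.sqrt ((ℓ' j : ℝ)) : ℂ) * A i j * G (fun p => ℓ' p - if p = j then 1 else 0)) = 0 := by
    apply Finset.sum_eq_zero
    intro j _
    by_cases hjm : j.val < m
    · rw [hAblock i j him hjm]; ring
    · push_neg at hjm
      by_cases hj0 : ℓ' j = 0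
      · simp [hj0]
      · have hji : j ≠ i := by intro h; rw [h] at hjm; omega
        have hℓ'j : 1 ≤ ℓ' j := Nat.one_le_iff_ne_zero.mpr hj0
        have hjS : j ∉ S := by simp [hS]; omega
        have hjT : j ∈ T := by simp [hT, hjm]
        have hS2 : (∑ p ∈ S, (ℓ' p - if p = j then 1 else 0)) = ∑ p ∈ S, ℓ' p :=
          sum_same_aux S ℓ' j hjS
        have hT2 : (∑ p ∈ T, (ℓ' p - if p = j then 1 else 0)) + 1 = ∑ p ∈ T, ℓ' p :=
          sum_dec_aux T ℓ' j hjT hℓ'j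
        have hU2 : (∑ p, (ℓ' p - if p = j then 1 else 0)) + 1 = ∑ p, ℓ' p :=
          sum_dec_aux Finset.univ ℓ' j (Finset.mem_univ j) hℓ'j
        have hG : G (fun p => ℓ' p - if p = j then 1 else 0) = 0 := by
          apply IH (∑ p, (ℓ' p - if p = j then 1 else 0)) (by omega) _ rfl
          omega
        rw [hG]; ring
  rw [hsum] at hr
  have hc : ((Real.sqrt ((ℓ' i : ℝ) + 1) : ℝ) : ℂ) ≠ 0 := by
    rw [Complex.ofReal_ne_zero]
    positivity
  exact (mul_eq_zero.mp hr).resolve_left hc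
end

section
/- Let Σ be a Hermitian 2n×2n matrix and Ω_n the standard symplectic form. If (1/ħ)Σ satisfies the uncertainty relation (2/ħ)Σ ≥ iΩ_n, and X ∈ ℝ^{2×2}, Y ∈ Sym(ℝ^{2×2}) satisfy (2/ħ)Y + i X Ω₁ X^T ≥ i Ω₁, then the matrix Σ' = diag(X, I) Σ diag(X^T, I) + diag(Y, 0) also satisfies (2/ħ)Σ' ≥ i Ω_{n}, where diag(X,I) acts as X on the first mode and identity on the remaining n-1 modes. -/
open Matrix
open scoped ComplexOrder

/-- The standard symplectic form `Ω_k = ⊕_{i=1}^k [[0,1],[-1,0]]` on `ℝ^{2k}`. -/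
def symplecticForm (k : ℕ) : Matrix (Fin (2 * k)) (Fin (2 * k)) ℝ :=
  Matrix.of fun i j =>
    if i.val + 1 = j.val ∧ i.val % 2 = 0 then 1
    else if j.val + 1 = i.val ∧ j.val % 2 = 0 then -1
    else 0

/-! With `M = diag(X, I)`, the symplectic form transforms blockwise:
`M Ω_n Mᴴ = diag(X Ω₁ Xᵀ, Ω_{n-1})`. Hence
`(2/ħ)Σ' - iΩ_n = M ((2/ħ)Σ - iΩ_n) Mᴴ + diag((2/ħ)Y + i X Ω₁ Xᵀ - iΩ₁, 0)`,
a congruence of a positive semidefinite matrix plus a block-diagonal positive semidefinite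
matrix. -/

namespace Matrix

variable {m n R : Type*} [Fintype m] [Fintype n]

theorem PosSemidef.fromBlocks_diagonal [Ring R] [PartialOrder R] [StarRing R] [AddLeftMono R]
    {A : Matrix m m R} {D : Matrix n n R} (hA : A.PosSemidef) (hD : D.PosSemidef) :
    (fromBlocks A 0 0 D).PosSemidef := by
  rw [posSemidef_iff_dotProduct_mulVec] at hA hD ⊢
  refine ⟨?_, fun x => ?_⟩
  · simp [IsHermitian, fromBlocks_conjTranspose, hA.1.eq, hD.1.eq]
  · simpa [fromBlocks_mulVec, dotProduct, Fintype.sum_sum_type] using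
      add_nonneg (hA.2 (x ∘ Sum.inl)) (hD.2 (x ∘ Sum.inr))

variable [DecidableEq n]

theorem fromBlocks_mul_fromBlocks_diagonal_mul_conjTranspose [Semiring R] [StarRing R]
    (X A : Matrix m m R) (D : Matrix n n R) :
    fromBlocks X 0 0 1 * fromBlocks A 0 0 D * (fromBlocks X 0 0 1)ᴴ =
      fromBlocks (X * A * Xᴴ) 0 0 D := by
  simp [fromBlocks_conjTranspose, fromBlocks_multiply]

theorem smul_add_sub_smul_eq_conj_add_fromBlocks {𝕜 : Type*} [CommRing R] [StarRing R]
    [Monoid 𝕜] [DistribMulAction 𝕜 R] [IsScalarTower 𝕜 R R] [SMulCommClass 𝕜 R R]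
    (a : 𝕜) (b : R) (X Y J : Matrix m m R) (S : Matrix (m ⊕ n) (m ⊕ n) R)
    (Ω : Matrix n n R) :
    a • (fromBlocks X 0 0 1 * S * (fromBlocks X 0 0 1)ᴴ + fromBlocks Y 0 0 0) -
        b • fromBlocks J 0 0 Ω =
      fromBlocks X 0 0 1 * (a • S - b • fromBlocks J 0 0 Ω) * (fromBlocks X 0 0 1)ᴴ +
        fromBlocks (a • Y + b • (X * J * Xᴴ) - b • J) 0 0 0 := by
  rw [Matrix.mul_sub, Matrix.sub_mul, Matrix.mul_smul, Matrix.smul_mul, Matrix.mul_smul,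
    Matrix.smul_mul, fromBlocks_mul_fromBlocks_diagonal_mul_conjTranspose, smul_add]
  ext (i | i) (j | j) <;>
    simp only [sub_apply, add_apply, smul_apply, fromBlocks_apply₁₁, fromBlocks_apply₁₂,
      fromBlocks_apply₂₁, fromBlocks_apply₂₂, zero_apply, smul_zero, add_zero, sub_zero]
  abel

end Matrix

theorem channel_preserves_uncertainty_general (k : ℕ) (hbar : ℝ)
    (Sigma : Matrix (Fin 2 ⊕ Fin (2 * k)) (Fin 2 ⊕ Fin (2 * k)) ℂ)
    (X Y : Matrix (Fin 2) (Fin 2) ℝ)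
    (hphys : ((2 / hbar) • Sigma -
      Complex.I • (Matrix.fromBlocks !![0, 1; -1, 0] 0 0 (symplecticForm k)).map
        Complex.ofReal).PosSemidef)
    (hchannel : (((2 / hbar) • Y).map Complex.ofReal +
        Complex.I • (X * !![0, 1; -1, 0] * Xᵀ).map Complex.ofReal -
        Complex.I • (!![(0 : ℝ), 1; -1, 0]).map Complex.ofReal).PosSemidef) :
    ((2 / hbar) • ((Matrix.fromBlocks (X.map Complex.ofReal) 0 0 1) * Sigma *
          (Matrix.fromBlocks (Xᵀ.map Complex.ofReal) 0 0 1) +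
        Matrix.fromBlocks (Y.map Complex.ofReal) 0 0 0) -
      Complex.I • (Matrix.fromBlocks !![0, 1; -1, 0] 0 0 (symplecticForm k)).map
        Complex.ofReal).PosSemidef := by
  have hXt : Xᵀ.map Complex.ofReal = (X.map Complex.ofReal)ᴴ := by
    rw [← conjTranspose_eq_transpose_of_trivial, conjTranspose_map]
    exact fun x => (Complex.conj_ofReal x).symm
  have hXJX : (X * !![0, 1; -1, 0] * Xᵀ).map Complex.ofReal =
      X.map Complex.ofReal * (!![0, 1; -1, 0] : Matrix (Fin 2) (Fin 2) ℝ).map Complex.ofReal *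
        (X.map Complex.ofReal)ᴴ := by
    rw [← hXt]
    exact (Matrix.map_mul (f := Complex.ofRealHom)).trans (congrArg (· * _) Matrix.map_mul)
  have hY : ((2 / hbar) • Y).map Complex.ofReal = (2 / hbar) • Y.map Complex.ofReal :=
    Matrix.map_smul _ _ (fun y => by rw [smul_eq_mul, Complex.ofReal_mul, Complex.real_smul]) Y
  have hΩ : (fromBlocks !![0, 1; -1, 0] 0 0 (symplecticForm k)).map Complex.ofReal =
      fromBlocks ((!![0, 1; -1, 0] : Matrix (Fin 2) (Fin 2) ℝ).map Complex.ofReal) 0 0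
        ((symplecticForm k).map Complex.ofReal) := by
    simp only [fromBlocks_map, Matrix.map_zero _ Complex.ofReal_zero]
  have hM : fromBlocks (X.map Complex.ofReal)ᴴ 0 0 (1 : Matrix (Fin (2 * k)) (Fin (2 * k)) ℂ) =
      (fromBlocks (X.map Complex.ofReal) 0 0 1)ᴴ := by
    rw [fromBlocks_conjTranspose, conjTranspose_zero, conjTranspose_zero, conjTranspose_one]
  rw [hY, hXJX] at hchannel
  rw [hΩ] at hphys ⊢
  rw [hXt, hM, smul_add_sub_smul_eq_conj_add_fromBlocks]
  exact (hphys.mul_mul_conjTranspose_same _).add (hchannel.fromBlocks_diagonal .zero)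

/-- A one-mode CPTP Gaussian channel `(X, Y)` (i.e. satisfying
`(2/hbar)Y + i X Ω₁ Xᵀ ≥ i Ω₁`) maps a physical covariance matrix `Σ` of `n = k+1` modes
(i.e. `(2/hbar)Σ ≥ i Ω_n`) to another physical covariance matrix
`Σ' = diag(X, I) Σ diag(Xᵀ, I) + diag(Y, 0)`. -/
theorem channel_preserves_uncertainty (k : ℕ) (hbar : ℝ) (hbar_pos : 0 < hbar)
    (Sigma : Matrix (Fin 2 ⊕ Fin (2 * k)) (Fin 2 ⊕ Fin (2 * k)) ℂ) (hSigma : Sigma.IsHermitian)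
    (X Y : Matrix (Fin 2) (Fin 2) ℝ) (hY : Y.IsSymm)
    (hphys : ((2 / hbar) • Sigma -
      Complex.I • (Matrix.fromBlocks !![0, 1; -1, 0] 0 0 (symplecticForm k)).map
        Complex.ofReal).PosSemidef)
    (hchannel : (((2 / hbar) • Y).map Complex.ofReal +
        Complex.I • (X * !![0, 1; -1, 0] * Xᵀ).map Complex.ofReal -
        Complex.I • (!![(0 : ℝ), 1; -1, 0]).map Complex.ofReal).PosSemidef) :
    ((2 / hbar) • ((Matrix.fromBlocks (X.map Complex.ofReal) 0 0 1) * Sigma *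
          (Matrix.fromBlocks (Xᵀ.map Complex.ofReal) 0 0 1) +
        Matrix.fromBlocks (Y.map Complex.ofReal) 0 0 0) -
      Complex.I • (Matrix.fromBlocks !![0, 1; -1, 0] 0 0 (symplecticForm k)).map
        Complex.ofReal).PosSemidef :=
  channel_preserves_uncertainty_general k hbar Sigma X Y hphys hchannel
end

section
/- Let Γ be a Hermitian positive semidefinite n×n matrix, Λ a complex symmetric n×n matrix, and consider the 2n×2n complex symmetric matrix A = [[Λ†, Γ],[Γ^T, Λ]] and X = [[0, I],[I, 0]]. Then I - XA > 0 (as a Hermitian matrix) if and only if Γ < I and Λ†(I - Γ^T)⁻¹Λ < I - Γ. -/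
open Matrix
open scoped ComplexOrder

/-!
Multiplying by `X` swaps the block rows, so `I - XA = [[I - Γᵀ, -Λ], [-Λᴴ, I - Γ]]`. A Hermitian
block matrix `[[P, B], [Bᴴ, D]]` is positive definite iff `P` is and so is its Schur complement
`D - Bᴴ P⁻¹ B`, as the quadratic form splits into `P` evaluated at `x + P⁻¹ B y` plus the Schur
complement evaluated at `y`. Finally `I - Γᵀ = (I - Γ)ᵀ` is positive definite iff `I - Γ` is.
-/

namespace Matrix

variable {m n : Type*} [Fintype m] [Fintype n] [DecidableEq m]

theorem PosDef.fromBlocks₁₁_posDef_iff {R : Type*} [CommRing R] [PartialOrder R] [StarRing R]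
    [StarOrderedRing R] {A : Matrix m m R} (B : Matrix m n R) (D : Matrix n n R)
    (hA : A.PosDef) [Invertible A] :
    (fromBlocks A B Bᴴ D).PosDef ↔ (D - Bᴴ * A⁻¹ * B).PosDef := by
  rw [posDef_iff_dotProduct_mulVec, posDef_iff_dotProduct_mulVec,
    IsHermitian.fromBlocks₁₁ _ _ hA.1]
  refine and_congr_right fun _ => ⟨fun h y hy => ?_, fun h z hz => ?_⟩
  · -- At `x = -A⁻¹ B y` the Schur identity leaves only the Schur-complement term.
    have hv : -((A⁻¹ * B) *ᵥ y) ⊕ᵥ y ≠ 0 := fun hv =>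
      hy <| funext fun i => congrFun hv (.inr i)
    have := h hv
    rwa [dotProduct_mulVec, schur_complement_eq₁₁ B D _ _ hA.1, neg_add_cancel,
      dotProduct_zero, zero_add, ← dotProduct_mulVec] at this
  · rw [dotProduct_mulVec, ← Sum.elim_comp_inl_inr z, schur_complement_eq₁₁ B D _ _ hA.1,
      ← dotProduct_mulVec, ← dotProduct_mulVec (star (z ∘ Sum.inr))]
    set x := z ∘ Sum.inl
    set y := z ∘ Sum.inr
    rcases eq_or_ne y 0 with hy | hy
    · have hx : x ≠ 0 := fun hx => hz <| by
        ext (i | i)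
        exacts [congrFun hx i, congrFun hy i]
      have hA' := (posDef_iff_dotProduct_mulVec.1 hA).2
        (x := x + (A⁻¹ * B) *ᵥ y) (by simpa [hy] using hx)
      simpa [hy] using hA'
    · exact lt_add_of_nonneg_of_lt
        ((posSemidef_iff_dotProduct_mulVec.1 hA.posSemidef).2 _) (h hy)

theorem posDef_fromBlocks_iff {K : Type*} [Field K] [PartialOrder K] [StarRing K]
    [StarOrderedRing K] {A : Matrix m m K} (B : Matrix m n K) (D : Matrix n n K) :
    (fromBlocks A B Bᴴ D).PosDef ↔ A.PosDef ∧ (D - Bᴴ * A⁻¹ * B).PosDef := by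
  refine ⟨fun h => ?_, fun ⟨hA, hS⟩ => ?_⟩
  · have hA : A.PosDef := h.submatrix Sum.inl_injective
    have := hA.isUnit.invertible
    exact ⟨hA, (PosDef.fromBlocks₁₁_posDef_iff B D hA).1 h⟩
  · have := hA.isUnit.invertible
    exact (PosDef.fromBlocks₁₁_posDef_iff B D hA).2 hS

end Matrix

theorem one_sub_XA_posDef_iff_general {n : ℕ}
    (Γ Λ : Matrix (Fin n) (Fin n) ℂ) :
    ((1 : Matrix (Fin n ⊕ Fin n) (Fin n ⊕ Fin n) ℂ) -
        (Matrix.fromBlocks 0 1 1 0) * Matrix.fromBlocks Λᴴ Γ Γᵀ Λ).PosDef ↔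
      ((1 - Γ).PosDef ∧ ((1 - Γ) - Λᴴ * (1 - Γᵀ)⁻¹ * Λ).PosDef) := by
  have hblock : (1 : Matrix (Fin n ⊕ Fin n) (Fin n ⊕ Fin n) ℂ) -
      (Matrix.fromBlocks 0 1 1 0) * Matrix.fromBlocks Λᴴ Γ Γᵀ Λ =
      fromBlocks (1 - Γᵀ) (-Λ) (-Λ)ᴴ (1 - Γ) := by
    rw [← fromBlocks_one, fromBlocks_multiply, sub_eq_add_neg, fromBlocks_neg, fromBlocks_add]
    simp [sub_eq_add_neg]
  have htranspose : 1 - Γᵀ = (1 - Γ)ᵀ := by rw [transpose_sub, transpose_one]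
  rw [hblock, posDef_fromBlocks_iff, htranspose, PosDef.transpose_iff]
  simp only [conjTranspose_neg, neg_mul, mul_neg, neg_neg]

/-- For `Γ ⪰ 0` Hermitian and `Λ` complex symmetric, with
`A = [[Λᴴ, Γ],[Γᵀ, Λ]]` and `X = [[0, I],[I, 0]]`, one has `I - XA ≻ 0` iff
`Γ ≺ I` and `Λᴴ (I - Γᵀ)⁻¹ Λ ≺ I - Γ`. -/
theorem one_sub_XA_posDef_iff {n : ℕ}
    (Γ Λ : Matrix (Fin n) (Fin n) ℂ) (hΓ : Γ.PosSemidef) (hΛ : Λ.IsSymm) :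
    ((1 : Matrix (Fin n ⊕ Fin n) (Fin n ⊕ Fin n) ℂ) -
        (Matrix.fromBlocks 0 1 1 0) * Matrix.fromBlocks Λᴴ Γ Γᵀ Λ).PosDef ↔
      ((1 - Γ).PosDef ∧ ((1 - Γ) - Λᴴ * (1 - Γᵀ)⁻¹ * Λ).PosDef) :=
  one_sub_XA_posDef_iff_general Γ Λ
end

section
/- Let x be a complex symmetric m×m matrix with ‖x‖ < 1 (operator norm), and set Γ = √(I - x* x). Then the 2m×2m matrix A = [[x, Γ^T],[Γ, -x*]] is symmetric and unitary. -/
/-!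
For symmetric `x` we have `x* = x̄ = xᴴ`, and `Γᵀ` is a positive square root of `1 - x xᴴ`.
The block entries of `AᴴA = 1` then reduce to `Γ² = 1 - xᴴx`, `(Γᵀ)² = 1 - x xᴴ` and the
intertwining `x Γ = Γᵀ x`. The latter follows from `x (1 - xᴴx) = (1 - x xᴴ) x`, because positive
square roots preserve intertwining: in eigenbases of the two roots an intertwiner `y` of the
squares satisfies `y i j * d j ^ 2 = e i ^ 2 * y i j`, hence `y i j * d j = e i * y i j` as
`d j, e i ≥ 0`.
-/

open Matrix
open scoped ComplexOrder

/-- The positive semidefinite square root of a positive semidefinite matrix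
(the Mathlib definition of December 2024, since removed from Mathlib). -/
noncomputable def Matrix.PosSemidef.sqrt {n 𝕜 : Type*} [Fintype n] [RCLike 𝕜] [DecidableEq n]
    {A : Matrix n n 𝕜} (hA : A.PosSemidef) : Matrix n n 𝕜 :=
  hA.1.eigenvectorUnitary.1 * diagonal ((↑) ∘ (√·) ∘ hA.1.eigenvalues) *
  (star hA.1.eigenvectorUnitary : Matrix n n 𝕜)

open scoped MatrixOrder
open Unitary

namespace Matrix

variable {𝕜 m n : Type*} [RCLike 𝕜] [Fintype m] [Fintype n] [DecidableEq m] [DecidableEq n]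

theorem PosSemidef.sqrt_eq_cfcSqrt {A : Matrix n n 𝕜} (hA : A.PosSemidef) :
    hA.sqrt = CFC.sqrt A := by
  rw [CFC.sqrt_eq_cfc, cfc_nnreal_eq_real _ A, hA.1.cfc_eq, IsHermitian.cfc, conjStarAlgAut_apply]
  simp [PosSemidef.sqrt, Function.comp_def, hA.eigenvalues_nonneg]

theorem PosSemidef.posSemidef_sqrt {A : Matrix n n 𝕜} (hA : A.PosSemidef) :
    hA.sqrt.PosSemidef :=
  hA.sqrt_eq_cfcSqrt ▸ (CFC.sqrt_nonneg A).posSemidef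

theorem PosSemidef.sqrt_mul_self {A : Matrix n n 𝕜} (hA : A.PosSemidef) :
    hA.sqrt * hA.sqrt = A :=
  hA.sqrt_eq_cfcSqrt ▸ CFC.sqrt_mul_sqrt_self A hA.nonneg

theorem IsHermitian.star_eigenvectorUnitary_mul {A : Matrix n n 𝕜} (hA : A.IsHermitian) :
    star (hA.eigenvectorUnitary : Matrix n n 𝕜) * A =
      diagonal (RCLike.ofReal ∘ hA.eigenvalues) * star (hA.eigenvectorUnitary : Matrix n n 𝕜) := by
  set U : Matrix n n 𝕜 := hA.eigenvectorUnitary.1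
  set D : Matrix n n 𝕜 := diagonal (RCLike.ofReal ∘ hA.eigenvalues)
  have hs : A = U * D * star U := hA.spectral_theorem
  have hU : star U * U = 1 := Unitary.coe_star_mul_self _
  rw [hs, ← mul_assoc, ← mul_assoc, hU, one_mul]

theorem IsHermitian.mul_eigenvectorUnitary {A : Matrix n n 𝕜} (hA : A.IsHermitian) :
    A * (hA.eigenvectorUnitary : Matrix n n 𝕜) =
      (hA.eigenvectorUnitary : Matrix n n 𝕜) * diagonal (RCLike.ofReal ∘ hA.eigenvalues) := by
  set U : Matrix n n 𝕜 := hA.eigenvectorUnitary.1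
  set D : Matrix n n 𝕜 := diagonal (RCLike.ofReal ∘ hA.eigenvalues)
  have hs : A = U * D * star U := hA.spectral_theorem
  have hU : star U * U = 1 := Unitary.coe_star_mul_self _
  rw [hs, mul_assoc, hU, mul_one]

theorem mul_diagonal_eq_diagonal_mul_of_mul_diagonal_mul_self {d : n → ℝ} {e : m → ℝ}
    (hd : ∀ j, 0 ≤ d j) (he : ∀ i, 0 ≤ e i) {y : Matrix m n 𝕜}
    (h : y * (diagonal (fun j ↦ (d j : 𝕜)) * diagonal (fun j ↦ (d j : 𝕜))) =
      diagonal (fun i ↦ (e i : 𝕜)) * diagonal (fun i ↦ (e i : 𝕜)) * y) :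
    y * diagonal (fun j ↦ (d j : 𝕜)) = diagonal (fun i ↦ (e i : 𝕜)) * y := by
  rw [diagonal_mul_diagonal, diagonal_mul_diagonal] at h
  refine Matrix.ext fun i j ↦ ?_
  have hij := congrFun₂ h i j
  rw [mul_diagonal, diagonal_mul] at hij
  rw [mul_diagonal, diagonal_mul]
  rcases eq_or_ne (y i j) 0 with hy | hy
  · simp [hy]
  · have hsq : d j * d j = e i * e i := by
      exact_mod_cast mul_left_cancel₀ hy (hij.trans (mul_comm _ _))
    rw [(mul_self_inj (hd j) (he i)).mp hsq, mul_comm]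

theorem PosSemidef.mul_eq_mul_of_mul_mul_self_eq {P : Matrix n n 𝕜} {Q : Matrix m m 𝕜}
    (hP : P.PosSemidef) (hQ : Q.PosSemidef) {x : Matrix m n 𝕜}
    (h : x * (P * P) = Q * Q * x) : x * P = Q * x := by
  set U : Matrix n n 𝕜 := hP.1.eigenvectorUnitary.1
  set V : Matrix m m 𝕜 := hQ.1.eigenvectorUnitary.1
  set D : Matrix n n 𝕜 := diagonal (RCLike.ofReal ∘ hP.1.eigenvalues)
  set E : Matrix m m 𝕜 := diagonal (RCLike.ofReal ∘ hQ.1.eigenvalues)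
  have hPU : P * U = U * D := hP.1.mul_eigenvectorUnitary
  have hVQ : star V * Q = E * star V := hQ.1.star_eigenvectorUnitary_mul
  have hU : U * star U = 1 := Unitary.coe_mul_star_self _
  have hV : V * star V = 1 := Unitary.coe_mul_star_self _
  have hdiag : star V * x * U * D = E * (star V * x * U) := by
    refine mul_diagonal_eq_diagonal_mul_of_mul_diagonal_mul_self hP.eigenvalues_nonneg
      hQ.eigenvalues_nonneg ?_
    calc star V * x * U * (D * D) = star V * (x * (P * P)) * U := by
          simp only [Matrix.mul_assoc]
          rw [← Matrix.mul_assoc U, ← hPU, Matrix.mul_assoc P, ← hPU]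
      _ = E * E * (star V * x * U) := by
          rw [h]
          simp only [← Matrix.mul_assoc]
          rw [hVQ, Matrix.mul_assoc E, hVQ, ← Matrix.mul_assoc E E]
  calc x * P = V * (star V * x * U * D) * star U := by
        rw [Matrix.mul_assoc _ U D, ← hPU]
        simp only [Matrix.mul_assoc]
        rw [hU, Matrix.mul_one, ← Matrix.mul_assoc V, hV, Matrix.one_mul]
    _ = V * (E * (star V * x * U)) * star U := by rw [hdiag]
    _ = Q * x := by
        rw [← Matrix.mul_assoc E, ← Matrix.mul_assoc E, ← hVQ]
        simp only [Matrix.mul_assoc]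
        rw [hU, Matrix.mul_one, ← Matrix.mul_assoc V, hV, Matrix.one_mul]

theorem conjTranspose_mul_self_fromBlocks_eq_one {x : Matrix m n 𝕜} {Γ : Matrix n n 𝕜}
    {Δ : Matrix m m 𝕜} (hΓ : Γ.PosSemidef) (hΔ : Δ.PosSemidef)
    (hΓΓ : Γ * Γ = 1 - xᴴ * x) (hΔΔ : Δ * Δ = 1 - x * xᴴ) :
    (fromBlocks x Δ Γ (-xᴴ))ᴴ * fromBlocks x Δ Γ (-xᴴ) = 1 := by
  have hxΓ : x * Γ = Δ * x := hΓ.mul_eq_mul_of_mul_mul_self_eq hΔ <| by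
    rw [hΓΓ, hΔΔ, Matrix.mul_sub, Matrix.sub_mul, Matrix.mul_one, Matrix.one_mul,
      Matrix.mul_assoc]
  have hΓxH : Γ * xᴴ = xᴴ * Δ := by
    simpa only [conjTranspose_mul, hΓ.1.eq, hΔ.1.eq] using congrArg conjTranspose hxΓ
  rw [fromBlocks_conjTranspose, fromBlocks_multiply, ← fromBlocks_one, hΓ.1.eq, hΔ.1.eq,
    conjTranspose_neg, conjTranspose_conjTranspose, Matrix.mul_neg, Matrix.neg_mul,
    Matrix.neg_mul, Matrix.mul_neg, neg_neg, hΓΓ, hΔΔ, hΓxH, hxΓ]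
  simp

end Matrix

theorem symmetric_unitary_completion_general {m : ℕ}
    (x : Matrix (Fin m) (Fin m) ℂ) (hx : xᵀ = x)
    (hpsd : ((1 : Matrix (Fin m) (Fin m) ℂ) - x.map (starRingEnd ℂ) * x).PosSemidef) :
    (Matrix.fromBlocks x hpsd.sqrtᵀ hpsd.sqrt (-(x.map (starRingEnd ℂ))))ᵀ =
      Matrix.fromBlocks x hpsd.sqrtᵀ hpsd.sqrt (-(x.map (starRingEnd ℂ))) ∧
    (Matrix.fromBlocks x hpsd.sqrtᵀ hpsd.sqrt (-(x.map (starRingEnd ℂ))))ᴴ *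
      Matrix.fromBlocks x hpsd.sqrtᵀ hpsd.sqrt (-(x.map (starRingEnd ℂ))) = 1 := by
  have hxH : xᴴ = x.map (starRingEnd ℂ) := by
    rw [conjTranspose, hx]
    rfl
  have hxHT : (x.map (starRingEnd ℂ))ᵀ = x.map (starRingEnd ℂ) := by
    rw [← transpose_map, hx]
  have hΓ := hpsd.posSemidef_sqrt
  have hΓΓ : hpsd.sqrt * hpsd.sqrt = 1 - xᴴ * x := by
    rw [hxH]; exact hpsd.sqrt_mul_self
  have hΓTΓT : hpsd.sqrtᵀ * hpsd.sqrtᵀ = 1 - x * xᴴ := by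
    rw [← transpose_mul, hΓΓ, transpose_sub, transpose_one, transpose_mul, hx, hxH, hxHT]
  refine ⟨by rw [fromBlocks_transpose, hx, transpose_transpose, transpose_neg, hxHT], ?_⟩
  simpa only [hxH] using conjTranspose_mul_self_fromBlocks_eq_one hΓ hΓ.transpose hΓΓ hΓTΓT

/-- For complex symmetric `x` with operator norm `‖x‖ < 1` and
`Γ = √(I - x* x)` (the positive semidefinite square root), the matrix
`A = [[x, Γᵀ],[Γ, -x*]]` is symmetric and unitary. -/
theorem symmetric_unitary_completion {m : ℕ}
    (x : Matrix (Fin m) (Fin m) ℂ) (hx : xᵀ = x)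
    (hnorm : ‖Matrix.toEuclideanCLM (𝕜 := ℂ) x‖ < 1)
    (hpsd : ((1 : Matrix (Fin m) (Fin m) ℂ) - x.map (starRingEnd ℂ) * x).PosSemidef) :
    (Matrix.fromBlocks x hpsd.sqrtᵀ hpsd.sqrt (-(x.map (starRingEnd ℂ))))ᵀ =
      Matrix.fromBlocks x hpsd.sqrtᵀ hpsd.sqrt (-(x.map (starRingEnd ℂ))) ∧
    (Matrix.fromBlocks x hpsd.sqrtᵀ hpsd.sqrt (-(x.map (starRingEnd ℂ))))ᴴ *
      Matrix.fromBlocks x hpsd.sqrtᵀ hpsd.sqrt (-(x.map (starRingEnd ℂ))) = 1 :=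
  symmetric_unitary_completion_general x hx hpsd
end

section
/- Let Σ be a 2(n+1)×2(n+1) complex Hermitian matrix and Ω₁, Ω_n the standard symplectic forms on 2 and 2n dimensions respectively, and let M be a fixed 2×2 positive semidefinite Hermitian matrix. The feasible set {Z ∈ Herm(ℂ^{2×2}) : Z ≥ (iħ/2)Ω₁ and Σ + diag(0, (iħ/2)Ω_n) ≥ diag(Z, 0)} is convex and closed, and the function Z ↦ tr(M Z) is real-valued and bounded above on it whenever Σ + (iħ/2)Ω_{n+1} ≥ 0. -/
/-!
Besides Hermiticity, the constraints are Loewner inequalities `A ≤ Z` and `diag(Z, 0) ≤ B` in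
which `Z` enters linearly, so the feasible set is the intersection of a real subspace with
preimages of closed convex order intervals.
Reading off the top-left block of `diag(Z, 0) ≤ B` gives `Z ≤ B₁₁`, and `X ↦ tr(M X)` is monotone
for `M ⪰ 0` because `tr(M X) = tr(√M X √M)`; hence `Re tr(M Z) ≤ Re tr(M B₁₁)` on the feasible set.
-/

open Matrix
open scoped ComplexOrder

/-- The feasible set of the effective-squeezing SDP: Hermitian `2×2` matrices `Z`
with `Z ≥ (iħ/2)Ω₁` and `Σ + diag(0, (iħ/2)Ω_n) ≥ diag(Z, 0)`. -/
def sdpFeasibleSet (n : ℕ) (hbar : ℝ)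
    (Sigma : Matrix (Fin 2 ⊕ Fin (2 * n)) (Fin 2 ⊕ Fin (2 * n)) ℂ) :
    Set (Matrix (Fin 2) (Fin 2) ℂ) :=
  {Z | Z.IsHermitian ∧
    (Z - (hbar / 2) • (Complex.I • (!![(0 : ℝ), 1; -1, 0]).map Complex.ofReal)).PosSemidef ∧
    (Sigma +
        Matrix.fromBlocks 0 0 0
          ((hbar / 2) • (Complex.I • (symplecticForm n).map Complex.ofReal)) -
        Matrix.fromBlocks Z 0 0 0).PosSemidef}

namespace Matrix

theorem isClosed_setOf_posSemidef {n R : Type*} [Fintype n] [Ring R] [PartialOrder R]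
    [StarRing R] [TopologicalSpace R] [IsTopologicalRing R] [ContinuousStar R] [T2Space R]
    [ClosedIciTopology R] :
    IsClosed {A : Matrix n n R | A.PosSemidef} := by
  simp only [posSemidef_iff_dotProduct_mulVec, Set.ofPred_and, Set.ofPred_forall]
  exact (isClosed_eq (by fun_prop) continuous_id).inter
    (isClosed_iInter fun x => isClosed_Ici.preimage (by fun_prop))

theorem IsHermitian.isSelfAdjoint_trace_mul {n R : Type*} [Fintype n] [CommSemiring R]
    [StarRing R] {A B : Matrix n n R} (hA : A.IsHermitian) (hB : B.IsHermitian) :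
    IsSelfAdjoint (A * B).trace := by
  rw [IsSelfAdjoint, ← trace_conjTranspose, conjTranspose_mul, hA.eq, hB.eq, trace_mul_comm]

open scoped MatrixOrder

variable {m p 𝕜 : Type*} [RCLike 𝕜]

theorem toBlocks₁₁_le_toBlocks₁₁ {X Y : Matrix (m ⊕ p) (m ⊕ p) 𝕜} (h : X ≤ Y) :
    X.toBlocks₁₁ ≤ Y.toBlocks₁₁ :=
  le_iff.mpr <| (le_iff.mp h).submatrix Sum.inl

def blockLoewnerSet (A : Matrix m m 𝕜) (B : Matrix (m ⊕ p) (m ⊕ p) 𝕜) : Set (Matrix m m 𝕜) :=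
  {Z | Z.IsHermitian ∧ A ≤ Z ∧ fromBlocks Z 0 0 0 ≤ B}

variable (A : Matrix m m 𝕜) (B : Matrix (m ⊕ p) (m ⊕ p) 𝕜)

theorem blockLoewnerSet_eq : blockLoewnerSet A B =
    {Z | IsSelfAdjoint Z} ∩ (Set.Ici A ∩ (fun Z => fromBlocks Z 0 0 0) ⁻¹' Set.Iic B) :=
  rfl

theorem le_toBlocks₁₁_of_mem_blockLoewnerSet {Z : Matrix m m 𝕜}
    (hZ : Z ∈ blockLoewnerSet A B) : Z ≤ B.toBlocks₁₁ := by
  simpa using toBlocks₁₁_le_toBlocks₁₁ hZ.2.2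

variable [Fintype m]

theorem orderClosedTopology : OrderClosedTopology (Matrix m m 𝕜) :=
  ⟨isClosed_le_of_isClosed_nonneg <| by
    simpa only [nonneg_iff_posSemidef] using isClosed_setOf_posSemidef⟩

attribute [local instance] orderClosedTopology

theorem PosSemidef.trace_mul_nonneg {A B : Matrix m m 𝕜} (hA : A.PosSemidef)
    (hB : B.PosSemidef) : 0 ≤ (A * B).trace := by
  classical
  have hsqrt : (CFC.sqrt A).IsHermitian := (CFC.sqrt_nonneg A).posSemidef.isHermitian
  calc 0 ≤ (CFC.sqrt A * B * (CFC.sqrt A)ᴴ).trace :=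
        (hB.mul_mul_conjTranspose_same _).trace_nonneg
    _ = (A * B).trace := by
      rw [hsqrt.eq, trace_mul_cycle, CFC.sqrt_mul_sqrt_self A hA.nonneg]

theorem trace_mul_le_trace_mul {M X Y : Matrix m m 𝕜} (hM : M.PosSemidef) (h : X ≤ Y) :
    (M * X).trace ≤ (M * Y).trace := by
  simpa [mul_sub, trace_sub] using hM.trace_mul_nonneg (le_iff.mp h)

theorem convex_blockLoewnerSet [Fintype p] : Convex ℝ (blockLoewnerSet A B) := by
  have hblock : IsLinearMap ℝ fun Z : Matrix m m 𝕜 =>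
      fromBlocks Z (0 : Matrix m p 𝕜) (0 : Matrix p m 𝕜) 0 :=
    ⟨fun _ _ => by simp [fromBlocks_add], fun _ _ => by simp [fromBlocks_smul]⟩
  rw [blockLoewnerSet_eq]
  exact (selfAdjoint.submodule ℝ _).convex.inter
    ((convex_Ici A).inter ((convex_Iic B).is_linear_preimage hblock))

theorem isClosed_blockLoewnerSet [Fintype p] : IsClosed (blockLoewnerSet A B) := by
  rw [blockLoewnerSet_eq]
  exact (isClosed_eq (by fun_prop) continuous_id).inter
    (isClosed_Ici.inter (isClosed_Iic.preimage (by fun_prop)))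

theorem bddAbove_re_trace_mul_image_blockLoewnerSet {M : Matrix m m 𝕜} (hM : M.PosSemidef) :
    BddAbove ((fun Z => RCLike.re (M * Z).trace) '' blockLoewnerSet A B) := by
  refine ⟨RCLike.re (M * B.toBlocks₁₁).trace, ?_⟩
  rintro _ ⟨Z, hZ, rfl⟩
  exact RCLike.re_le_re (trace_mul_le_trace_mul hM (le_toBlocks₁₁_of_mem_blockLoewnerSet A B hZ))

end Matrix

open scoped MatrixOrder in
theorem sdpFeasibleSet_eq_blockLoewnerSet (n : ℕ) (hbar : ℝ)
    (Sigma : Matrix (Fin 2 ⊕ Fin (2 * n)) (Fin 2 ⊕ Fin (2 * n)) ℂ) :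
    sdpFeasibleSet n hbar Sigma = blockLoewnerSet
      ((hbar / 2) • (Complex.I • (!![(0 : ℝ), 1; -1, 0]).map Complex.ofReal))
      (Sigma + fromBlocks 0 0 0
        ((hbar / 2) • (Complex.I • (symplecticForm n).map Complex.ofReal))) :=
  rfl

theorem sdp_feasible_set_properties_general (n : ℕ) (hbar : ℝ)
    (Sigma : Matrix (Fin 2 ⊕ Fin (2 * n)) (Fin 2 ⊕ Fin (2 * n)) ℂ)
    (M : Matrix (Fin 2) (Fin 2) ℂ) (hM : M.PosSemidef) :
    Convex ℝ (sdpFeasibleSet n hbar Sigma) ∧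
    IsClosed (sdpFeasibleSet n hbar Sigma) ∧
    (∀ Z ∈ sdpFeasibleSet n hbar Sigma, ((M * Z).trace).im = 0) ∧
    ((Sigma + (hbar / 2) • (Complex.I •
        (Matrix.fromBlocks !![(0 : ℝ), 1; -1, 0] 0 0 (symplecticForm n)).map
          Complex.ofReal)).PosSemidef →
      BddAbove ((fun Z => ((M * Z).trace).re) '' sdpFeasibleSet n hbar Sigma)) := by
  rw [sdpFeasibleSet_eq_blockLoewnerSet]
  exact ⟨convex_blockLoewnerSet _ _, isClosed_blockLoewnerSet _ _,
    fun Z hZ => Complex.conj_eq_iff_im.mp (hM.isHermitian.isSelfAdjoint_trace_mul hZ.1),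
    fun _ => bddAbove_re_trace_mul_image_blockLoewnerSet _ _ hM⟩

/-- The feasible set of the SDP is convex and closed; the objective
`Z ↦ tr(M Z)` is real-valued on it, and it is bounded above on the feasible set whenever
`Σ + (iħ/2)Ω_{n+1} ⪰ 0`. -/
theorem sdp_feasible_set_properties (n : ℕ) (hbar : ℝ) (hbar_pos : 0 < hbar)
    (Sigma : Matrix (Fin 2 ⊕ Fin (2 * n)) (Fin 2 ⊕ Fin (2 * n)) ℂ)
    (hSigma : Sigma.IsHermitian)
    (M : Matrix (Fin 2) (Fin 2) ℂ) (hM : M.PosSemidef) :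
    Convex ℝ (sdpFeasibleSet n hbar Sigma) ∧
    IsClosed (sdpFeasibleSet n hbar Sigma) ∧
    (∀ Z ∈ sdpFeasibleSet n hbar Sigma, ((M * Z).trace).im = 0) ∧
    ((Sigma + (hbar / 2) • (Complex.I •
        (Matrix.fromBlocks !![(0 : ℝ), 1; -1, 0] 0 0 (symplecticForm n)).map
          Complex.ofReal)).PosSemidef →
      BddAbove ((fun Z => ((M * Z).trace).re) '' sdpFeasibleSet n hbar Sigma)) :=
  sdp_feasible_set_properties_general n hbar Sigma M hM
end
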